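/- Let 1 < p < θ and let t₀ := √(pθ(p+1)/(θ+1)) + √(pθ(p+1)/(θ+1) − √(pθ(p+1)/(θ+1))). Then L(2t₀) < 0, and every real number s* with s* > 2 and L(s*) = 0 satisfies s* > 2t₀. -/

import Mathlib

/-!
Put `A = pθ(p+1)/(θ+1)` and `a = √A`. Then
`L(2t) = 16 (t⁴ - a²(2t-1)²) - 16 A (θ-p)(2t-1)/(θ+1)`,
and `t⁴ - a²(2t-1)² = (t² - 2at + a)(t² + 2at - a)`. For `θ > p` the second summand is negative
once `t > 1/2`, and the first is nonpositive between the roots `a ± √(a² - a)` of `t² - 2at + a`.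
Since `A > 1`, the smaller root lies in `(1/2, 1)` and the larger one is `t₀`; so `L < 0` on
`(2, 2t₀]`, which gives both claims.
-/

noncomputable section

/-- The quartic polynomial `L`. -/
def Lpoly (p θ s : ℝ) : ℝ :=
  s ^ 4 - (16 * p * θ * (p + 1) / (θ + 1)) * s ^ 2
    + (16 * p * θ * (p + 1) * (p + θ + 2) / (θ + 1) ^ 2) * s
    - 16 * p * θ * (p + 1) ^ 2 / (θ + 1) ^ 2

open Set

theorem Lpoly_two_mul (p θ t : ℝ) (hθ : θ + 1 ≠ 0) :
    Lpoly p θ (2 * t) = 16 * (t ^ 4 - p * θ * (p + 1) / (θ + 1) * (2 * t - 1) ^ 2)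
      - 16 * (p * θ * (p + 1) / (θ + 1)) * (θ - p) * (2 * t - 1) / (θ + 1) := by
  unfold Lpoly
  field_simp
  ring

theorem one_lt_mul_mul_div {p θ : ℝ} (hp : 1 < p) (hθ : 1 ≤ θ) :
    1 < p * θ * (p + 1) / (θ + 1) := by
  rw [one_lt_div (by linarith)]
  nlinarith [mul_pos (by linarith : (0 : ℝ) < θ)
    (mul_pos (sub_pos.2 hp) (by linarith : (0 : ℝ) < p + 2))]

theorem sub_sqrt_sq_sub_self_mem_Ioo {a : ℝ} (ha : 1 < a) :
    a - √(a ^ 2 - a) ∈ Ioo (1 / 2) 1 := by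
  have hb : √(a ^ 2 - a) ^ 2 = a ^ 2 - a := Real.sq_sqrt (by nlinarith)
  have hb0 := Real.sqrt_nonneg (a ^ 2 - a)
  constructor <;> nlinarith

theorem pow_four_le_of_mem_Icc {a t : ℝ} (ha : 1 ≤ a)
    (hta : t ∈ Icc (a - √(a ^ 2 - a)) (a + √(a ^ 2 - a))) :
    t ^ 4 ≤ a ^ 2 * (2 * t - 1) ^ 2 := by
  have hb : √(a ^ 2 - a) ^ 2 = a ^ 2 - a := Real.sq_sqrt (by nlinarith)
  -- `t² - 2at + a` factors as `(t - (a - b)) (t - (a + b))` with `b = √(a² - a)`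
  have hsq : t ^ 2 ≤ a * (2 * t - 1) := by
    nlinarith [mul_nonpos_of_nonneg_of_nonpos (sub_nonneg.2 hta.1) (sub_nonpos.2 hta.2)]
  calc t ^ 4 = (t ^ 2) ^ 2 := by ring
    _ ≤ (a * (2 * t - 1)) ^ 2 := pow_le_pow_left₀ (sq_nonneg t) hsq 2
    _ = a ^ 2 * (2 * t - 1) ^ 2 := by ring

theorem Lpoly_two_mul_neg {p θ a t : ℝ} (hθ : 0 < θ + 1) (hpθ : p < θ) (ha : 1 < a)
    (ha2 : a ^ 2 = p * θ * (p + 1) / (θ + 1))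
    (hta : t ∈ Icc (a - √(a ^ 2 - a)) (a + √(a ^ 2 - a))) :
    Lpoly p θ (2 * t) < 0 := by
  have ht : 1 / 2 < t := (sub_sqrt_sq_sub_self_mem_Ioo ha).1.trans_le hta.1
  have hquartic := pow_four_le_of_mem_Icc ha.le hta
  have hcorr : 0 < 16 * a ^ 2 * (θ - p) * (2 * t - 1) / (θ + 1) := by
    have : 0 < θ - p := sub_pos.2 hpθ
    have : 0 < 2 * t - 1 := by linarith
    positivity
  rw [Lpoly_two_mul p θ t hθ.ne', ← ha2]
  linarith

/-- for `1 < p < θ`, `L(2t₀) < 0` and every root `s* > 2` of `L`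
satisfies `s* > 2t₀`. -/
theorem stmt7 (p θ t₀ : ℝ) (hp : 1 < p) (hpθ : p < θ)
    (ht₀ : t₀ = Real.sqrt (p * θ * (p + 1) / (θ + 1)) +
      Real.sqrt (p * θ * (p + 1) / (θ + 1) - Real.sqrt (p * θ * (p + 1) / (θ + 1)))) :
    Lpoly p θ (2 * t₀) < 0 ∧
      ∀ s' : ℝ, 2 < s' → Lpoly p θ s' = 0 → 2 * t₀ < s' := by
  have hA := one_lt_mul_mul_div hp (hp.trans hpθ).le
  set a := √(p * θ * (p + 1) / (θ + 1))
  have ha : 1 < a := Real.lt_sqrt_of_sq_lt (by simpa using hA)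
  have ha2 : a ^ 2 = p * θ * (p + 1) / (θ + 1) := Real.sq_sqrt (by linarith)
  rw [← ha2] at ht₀
  have hneg (t) := Lpoly_two_mul_neg (t := t) (by linarith) hpθ ha ha2
  have hlow := sub_sqrt_sq_sub_self_mem_Ioo ha
  refine ⟨hneg t₀ ⟨by rw [ht₀]; linarith [Real.sqrt_nonneg (a ^ 2 - a)], ht₀.le⟩, fun s hs hLs => ?_⟩
  by_contra! hle
  have := hneg (s / 2) ⟨by linarith [hlow.2], by linarith⟩
  rw [mul_div_cancel₀ s two_ne_zero, hLs] at this
  exact this.false
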